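/- arXiv:1909.11581 — 3 statements merged into one kernel-verified Lean document; each statement's English description precedes it below -/
import Mathlib

section
/- A Simple Temporal Network over a finite set of time-points, given as a finite set of constraints of the form y - x ≤ c with rational c, is consistent if and only if the associated weighted directed graph (edge x → y with weight c for each constraint y - x ≤ c) contains no negative-weight cycle. -/
/-- A path in the constraint graph of an STN: each constraint `y - x ≤ c`,
recorded as the triple `(x, y, c)`, yields an edge `x → y` of weight `c`. -/
inductive STNPath {V : Type} (C : Finset (V × V × ℚ)) : V → V → List (V × V × ℚ) → Prop
  | nil (v : V) : STNPath C v v []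
  | cons {u w v : V} (c : ℚ) (l : List (V × V × ℚ)) :
      (u, w, c) ∈ C → STNPath C w v l → STNPath C u v ((u, w, c) :: l)

/-!
A potential `β` turns every edge weight `c` of `x → y` into a bound on `β y - β x`; summing
along a cycle, its weight is at least `0`. Conversely, without negative cycles a path can be
shortened by cutting out the cycle at a repeated vertex, so every path is at least as heavy as
one of length at most `|V|`. Among these finitely many paths there is a lightest path ending at
each vertex `v`, and its weight `β v` is a potential: appending an edge `x → y` to the lightest
path to `x` gives a path to `y`.
-/

lemma List.exists_eq_append_cons_append_cons_of_not_nodup_map {α β : Type*} {f : α → β} :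
    ∀ {l : List α}, ¬ (l.map f).Nodup → ∃ s a t b r, l = s ++ a :: t ++ b :: r ∧ f a = f b
  | [], h => absurd List.nodup_nil h
  | a :: l, h => by
    rw [List.map_cons, List.nodup_cons, not_and_or, not_not] at h
    rcases h with hmem | hdup
    · obtain ⟨b, hb, hfb⟩ := List.mem_map.1 hmem
      obtain ⟨t, r, rfl⟩ := List.append_of_mem hb
      exact ⟨[], a, t, b, r, rfl, hfb.symm⟩
    · obtain ⟨s, a', t, b, r, rfl, hf⟩ :=
        List.exists_eq_append_cons_append_cons_of_not_nodup_map hdup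
      exact ⟨a :: s, a', t, b, r, rfl, hf⟩

lemma List.finite_setOf_forall_mem_length_le {α : Type*} (s : Finset α) (n : ℕ) :
    {l : List α | (∀ x ∈ l, x ∈ s) ∧ l.length ≤ n}.Finite := by
  refine ((List.finite_length_le s n).image (List.map Subtype.val)).subset ?_
  rintro l ⟨hs, hn⟩
  lift l to List s using hs
  exact ⟨l, by simpa using hn, rfl⟩

variable {V : Type}

def pathWeight (l : List (V × V × ℚ)) : ℚ := (l.map fun e => e.2.2).sum

@[simp]
lemma pathWeight_nil : pathWeight ([] : List (V × V × ℚ)) = 0 := rfl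

@[simp]
lemma pathWeight_cons (e : V × V × ℚ) (l : List (V × V × ℚ)) :
    pathWeight (e :: l) = e.2.2 + pathWeight l := by
  simp [pathWeight]

@[simp]
lemma pathWeight_append (l₁ l₂ : List (V × V × ℚ)) :
    pathWeight (l₁ ++ l₂) = pathWeight l₁ + pathWeight l₂ := by
  simp [pathWeight]

namespace STNPath

variable {C : Finset (V × V × ℚ)} {u v : V} {l l₁ l₂ : List (V × V × ℚ)}

lemma nil_iff : STNPath C u v [] ↔ u = v :=
  ⟨fun h => by cases h; rfl, fun h => h ▸ nil u⟩

lemma cons_iff {e : V × V × ℚ} :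
    STNPath C u v (e :: l) ↔ e.1 = u ∧ e ∈ C ∧ STNPath C e.2.1 v l := by
  constructor
  · rintro (_ | ⟨c, l, he, hl⟩)
    exact ⟨rfl, he, hl⟩
  · rintro ⟨rfl, he, hl⟩
    exact cons e.2.2 l he hl

lemma append_iff : STNPath C u v (l₁ ++ l₂) ↔ ∃ w, STNPath C u w l₁ ∧ STNPath C w v l₂ := by
  induction l₁ generalizing u with
  | nil => simp [nil_iff]
  | cons e l₁ ih => simp [cons_iff, ih, and_assoc]

lemma mem_of_mem (h : STNPath C u v l) {e : V × V × ℚ} (he : e ∈ l) : e ∈ C := by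
  induction h with
  | nil => simp at he
  | cons c l hC _ ih =>
    rcases List.mem_cons.1 he with rfl | he
    exacts [hC, ih he]

lemma sub_le_pathWeight {β : V → ℚ} (hβ : ∀ x ∈ C, β x.2.1 - β x.1 ≤ x.2.2)
    (h : STNPath C u v l) : β v - β u ≤ pathWeight l := by
  induction h with
  | nil => simp
  | cons c l hC _ ih =>
    have := hβ _ hC
    simp only [pathWeight_cons] at this ⊢
    linarith

lemma exists_cycle_of_card_lt_length [Fintype V] (h : STNPath C u v l)
    (hl : Fintype.card V < l.length) :
    ∃ w s c r, l = s ++ c ++ r ∧ c ≠ [] ∧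
      STNPath C u w s ∧ STNPath C w w c ∧ STNPath C w v r := by
  have hdup : ¬ (l.map Prod.fst).Nodup := fun hnd => by
    simpa using (hnd.length_le_card.trans_lt hl)
  obtain ⟨s, a, t, b, r, rfl, hab⟩ :=
    List.exists_eq_append_cons_append_cons_of_not_nodup_map hdup
  obtain ⟨w', h₁, hbr⟩ := append_iff.1 h
  obtain ⟨w, hs, hat⟩ := append_iff.1 h₁
  obtain ⟨rfl, -⟩ := cons_iff.1 hat
  obtain ⟨rfl, -⟩ := cons_iff.1 hbr
  rw [hab] at hs hat
  exact ⟨b.1, s, a :: t, b :: r, rfl, List.cons_ne_nil _ _, hs, hat, hbr⟩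

lemma exists_length_le_card_pathWeight_le [Fintype V]
    (hC : ∀ w c, STNPath C w w c → 0 ≤ pathWeight c) (h : STNPath C u v l) :
    ∃ l', STNPath C u v l' ∧ l'.length ≤ Fintype.card V ∧ pathWeight l' ≤ pathWeight l := by
  induction hlen : l.length using Nat.strong_induction_on generalizing l with
  | _ n ih =>
    by_cases hl : l.length ≤ Fintype.card V
    · exact ⟨l, h, hl, le_rfl⟩
    obtain ⟨w, s, c, r, rfl, hc, hs, hcyc, hr⟩ := h.exists_cycle_of_card_lt_length (by omega)
    have hshorter : (s ++ r).length < n := by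
      simpa [← hlen] using List.length_pos_iff.2 hc
    obtain ⟨l', h', hl', hw'⟩ := ih _ hshorter (append_iff.2 ⟨w, hs, hr⟩) rfl
    refine ⟨l', h', hl', ?_⟩
    have := hC w c hcyc
    simp only [pathWeight_append] at hw' ⊢
    linarith

end STNPath

lemma exists_lightest_path_to [Fintype V] {C : Finset (V × V × ℚ)}
    (hC : ∀ w c, STNPath C w w c → 0 ≤ pathWeight c) (v : V) :
    ∃ u l, STNPath C u v l ∧ ∀ u' l', STNPath C u' v l' → pathWeight l ≤ pathWeight l' := by
  let short := {l | (∃ u, STNPath C u v l) ∧ l.length ≤ Fintype.card V}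
  have hfin : short.Finite :=
    (List.finite_setOf_forall_mem_length_le C _).subset fun l ⟨⟨_, h⟩, hl⟩ =>
      ⟨fun _ => h.mem_of_mem, hl⟩
  obtain ⟨l, ⟨⟨u, h⟩, -⟩, hmin⟩ :=
    Set.exists_min_image short pathWeight hfin ⟨[], ⟨v, .nil v⟩, Nat.zero_le _⟩
  refine ⟨u, l, h, fun u' l' h' => ?_⟩
  obtain ⟨l'', h'', hl'', hw''⟩ := h'.exists_length_le_card_pathWeight_le hC
  exact (hmin l'' ⟨⟨u', h''⟩, hl''⟩).trans hw''

theorem stn_consistent_iff_no_negative_cycle_general {V : Type}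
    [Fintype V] (C : Finset (V × V × ℚ)) :
    (∃ β : V → ℚ, ∀ x ∈ C, β x.2.1 - β x.1 ≤ x.2.2) ↔
      ¬ ∃ (v : V) (l : List (V × V × ℚ)), STNPath C v v l ∧ l ≠ [] ∧
        (l.map (fun e => e.2.2)).sum < 0 := by
  constructor
  · rintro ⟨β, hβ⟩ ⟨v, l, h, -, hneg⟩
    have := h.sub_le_pathWeight hβ
    rw [sub_self] at this
    exact hneg.not_ge this
  · intro hneg
    have hC : ∀ w c, STNPath C w w c → 0 ≤ pathWeight c := fun w c h =>
      le_of_not_gt fun hc => hneg ⟨w, c, h, by rintro rfl; simp at hc, hc⟩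
    choose u l hl hmin using exists_lightest_path_to hC
    refine ⟨fun v => pathWeight (l v), fun e he => ?_⟩
    have hext : STNPath C (u e.1) e.2.1 (l e.1 ++ [e]) :=
      STNPath.append_iff.2 ⟨e.1, hl e.1, STNPath.cons_iff.2 ⟨rfl, he, .nil _⟩⟩
    have := hmin e.2.1 _ _ hext
    simp only [pathWeight_append, pathWeight_cons, pathWeight_nil] at this
    linarith

/-- An STN (finite set of difference constraints `y - x ≤ c` over
rational variables) is consistent iff its constraint graph contains no
negative-weight cycle (a nonempty path from some vertex back to itself of
negative total weight). -/
theorem stn_consistent_iff_no_negative_cycle {V : Type} [DecidableEq V]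
    [Fintype V] (C : Finset (V × V × ℚ)) :
    (∃ β : V → ℚ, ∀ x ∈ C, β x.2.1 - β x.1 ≤ x.2.2) ↔
      ¬ ∃ (v : V) (l : List (V × V × ℚ)), STNPath C v v l ∧ l ≠ [] ∧
        (l.map (fun e => e.2.2)).sum < 0 :=
  stn_consistent_iff_no_negative_cycle_general C
end

section
/- If an STN (a finite set of difference constraints over rational variables) is consistent, then for any additional single constraint of the form y - x ≤ c, the augmented STN is consistent if and only if c ≥ -(shortest path distance from y to x in the constraint graph), where the distance is +∞ if no path exists. -/
namespace STNAux

variable {V : Type}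

/-- The weight of a path. -/
def wt (l : List (V × V × ℚ)) : ℚ := (l.map (fun e => e.2.2)).sum

lemma path_lb {C : Finset (V × V × ℚ)} {β : V → ℚ}
    (hβ : ∀ e ∈ C, β e.2.1 - β e.1 ≤ e.2.2) :
    ∀ {u v : V} {l}, STNPath C u v l → β v - β u ≤ wt l := by
  intro u v l h
  induction h with
  | nil v => simp [wt]
  | cons c l hmem hpath ih =>
    have h1 := hβ _ hmem
    simp only [wt, List.map_cons, List.sum_cons] at *
    linarith

lemma path_append {C : Finset (V × V × ℚ)} {u v w : V} {cc : ℚ} {l}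
    (h : STNPath C u v l) (he : (v, w, cc) ∈ C) :
    STNPath C u w (l ++ [(v, w, cc)]) := by
  induction h with
  | nil v => exact .cons cc [] he (.nil w)
  | cons c l hmem hpath ih => exact .cons c _ hmem (ih he)

lemma wt_append (l : List (V × V × ℚ)) (e : V × V × ℚ) :
    wt (l ++ [e]) = wt l + e.2.2 := by
  simp [wt]

/-- Each path weight, multiplied by the product of denominators, is an integer. -/
lemma wt_int {C : Finset (V × V × ℚ)} :
    ∀ {u v : V} {l}, STNPath C u v l →
      ∃ n : ℤ, wt l * (∏ e ∈ C, (e.2.2.den : ℚ)) = n := by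
  intro u v l h
  induction h with
  | nil v => exact ⟨0, by simp [wt]⟩
  | cons c l hmem hpath ih =>
    rename_i u' w' v'
    obtain ⟨n, hn⟩ := ih
    have hdvd : (c.den : ℚ) ∣ ∏ e ∈ C, (e.2.2.den : ℚ) :=
      Finset.dvd_prod_of_mem (fun e => ((e.2.2.den : ℚ))) hmem
    obtain ⟨k, hk⟩ := hdvd
    -- k is a product of naturals cast to ℚ; show it's an integer
    obtain ⟨m, hm⟩ : ∃ m : ℤ, c * (∏ e ∈ C, (e.2.2.den : ℚ)) = m := by
      have hprod : ∃ K : ℤ, (∏ e ∈ C, (e.2.2.den : ℚ)) = (c.den : ℚ) * K := by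
        -- the product over C \ {(_,_,c)} times c.den
        classical
        rw [← Finset.prod_erase_mul C _ hmem]
        refine ⟨∏ e ∈ C.erase (u', w', c), (e.2.2.den : ℤ), ?_⟩
        push_cast
        ring
      obtain ⟨K, hK⟩ := hprod
      refine ⟨c.num * K, ?_⟩
      rw [hK, ← mul_assoc]
      rw [Rat.mul_den_eq_num]
      push_cast
      ring
    refine ⟨m + n, ?_⟩
    simp only [wt, List.map_cons, List.sum_cons] at *
    push_cast
    rw [add_mul, hn, hm]

/-- The minimum path weight from y to v exists when some path exists and the
system is consistent. -/
lemma exists_min_weight {C : Finset (V × V × ℚ)} {β : V → ℚ}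
    (hβ : ∀ e ∈ C, β e.2.1 - β e.1 ≤ e.2.2) (y v : V)
    (hne : ∃ l, STNPath C y v l) :
    ∃ w : ℚ, (∃ l, STNPath C y v l ∧ wt l = w) ∧
      ∀ l, STNPath C y v l → w ≤ wt l := by
  classical
  set D : ℚ := ∏ e ∈ C, (e.2.2.den : ℚ) with hD
  have hDpos : 0 < D := by
    apply Finset.prod_pos
    intro e _
    exact_mod_cast e.2.2.pos
  set P : ℤ → Prop := fun n => ∃ l, STNPath C y v l ∧ wt l * D = n with hP
  have Hinh : ∃ n, P n := by
    obtain ⟨l, hl⟩ := hne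
    obtain ⟨n, hn⟩ := wt_int hl
    exact ⟨n, l, hl, hn⟩
  have Hbdd : ∃ b : ℤ, ∀ n, P n → b ≤ n := by
    refine ⟨⌈(β v - β y) * D⌉, ?_⟩
    rintro n ⟨l, hl, hn⟩
    have h1 : β v - β y ≤ wt l := path_lb hβ hl
    have h2 : (β v - β y) * D ≤ (n : ℚ) := by
      rw [← hn]
      exact mul_le_mul_of_nonneg_right h1 hDpos.le
    exact_mod_cast Int.ceil_le.mpr h2
  obtain ⟨n₀, ⟨l₀, hl₀, hw₀⟩, hmin⟩ := Int.exists_least_of_bdd Hbdd Hinh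
  refine ⟨wt l₀, ⟨l₀, hl₀, rfl⟩, ?_⟩
  intro l hl
  obtain ⟨n, hn⟩ := wt_int hl
  have : n₀ ≤ n := hmin n ⟨l, hl, hn⟩
  have h3 : wt l₀ * D ≤ wt l * D := by
    rw [hw₀, hn]; exact_mod_cast this
  exact le_of_mul_le_mul_right h3 hDpos

end STNAux

/-- If an STN is consistent, then adding one constraint
`y - x ≤ c` keeps it consistent iff `c` is at least minus the shortest-path
distance from `y` to `x` in the constraint graph, i.e. iff `c + w(ρ) ≥ 0` for
every path `ρ` from `y` to `x` (vacuously, if no such path exists — distance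
`+∞`). -/
theorem stn_incremental_consistency {V : Type} [DecidableEq V] [Fintype V]
    (C : Finset (V × V × ℚ))
    (hcons : ∃ β : V → ℚ, ∀ e ∈ C, β e.2.1 - β e.1 ≤ e.2.2)
    (x y : V) (c : ℚ) :
    (∃ β : V → ℚ, ∀ e ∈ insert (x, y, c) C, β e.2.1 - β e.1 ≤ e.2.2) ↔
      ∀ l : List (V × V × ℚ), STNPath C y x l →
        0 ≤ c + (l.map (fun e => e.2.2)).sum := by
  classical
  obtain ⟨β, hβ⟩ := hcons
  constructor
  · rintro ⟨β', hβ'⟩ l hl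
    have hC : ∀ e ∈ C, β' e.2.1 - β' e.1 ≤ e.2.2 := fun e he =>
      hβ' e (Finset.mem_insert_of_mem he)
    have h1 : β' x - β' y ≤ STNAux.wt l := STNAux.path_lb hC hl
    have h2 : β' y - β' x ≤ c := hβ' (x, y, c) (Finset.mem_insert_self _ _)
    show 0 ≤ c + STNAux.wt l
    linarith
  · intro hc
    -- shortest path distances from y
    set P : V → Prop := fun v => ∃ l, STNPath C y v l with hP
    set d : V → ℚ := fun v =>
      if h : P v then (STNAux.exists_min_weight hβ y v h).choose else 0 with hd
    have hd_spec : ∀ v (h : P v),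
        (∃ l, STNPath C y v l ∧ STNAux.wt l = d v) ∧
          ∀ l, STNPath C y v l → d v ≤ STNAux.wt l := by
      intro v h
      have := (STNAux.exists_min_weight hβ y v h).choose_spec
      simpa [hd, h] using this
    set β' : V → ℚ := fun v => if P v then min (β v) (β x + c + d v) else β v with hβ'def
    have hβ'le : ∀ v, β' v ≤ β v := by
      intro v
      simp only [hβ'def]
      split
      · exact min_le_left _ _
      · exact le_refl _
    have hPy : P y := ⟨[], .nil y⟩
    have hdy : d y ≤ 0 := (hd_spec y hPy).2 [] (.nil y) |>.trans_eq (by simp [STNAux.wt])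
    refine ⟨β', ?_⟩
    intro e he
    rcases Finset.mem_insert.mp he with he | he
    · -- the new edge (x, y, c): need β' y - β' x ≤ c
      subst he
      show β' y - β' x ≤ c
      have h1 : β' y ≤ β x + c + d y := by
        simp only [hβ'def, if_pos hPy]
        exact min_le_right _ _
      have h2 : β x ≤ β' x := by
        simp only [hβ'def]
        split
        · rename_i hpx
          refine le_min (le_refl _) ?_
          obtain ⟨⟨l, hl, hwl⟩, -⟩ := hd_spec x hpx
          have := hc l hl
          have : 0 ≤ c + d x := by rw [← hwl]; exact this
          linarith
        · exact le_refl _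
      linarith
    · -- an old edge (u, w, cc)
      obtain ⟨u, w, cc⟩ := e
      show β' w - β' u ≤ cc
      have hbw : β' w ≤ β u + cc := by
        have := hβ (u, w, cc) he
        have := hβ'le w
        simp only at *
        linarith
      by_cases hpu : P u
      · obtain ⟨lu, hlu, hwu⟩ := (hd_spec u hpu).1
        have hpw : P w := ⟨lu ++ [(u, w, cc)], STNAux.path_append hlu he⟩
        have hdw : d w ≤ d u + cc := by
          have := (hd_spec w hpw).2 _ (STNAux.path_append hlu he)
          rw [STNAux.wt_append, hwu] at this
          exact this
        have h1 : β' w ≤ β x + c + d w := by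
          simp only [hβ'def, if_pos hpw]
          exact min_le_right _ _
        have h2 : β' u = min (β u) (β x + c + d u) := by simp only [hβ'def, if_pos hpu]
        rcases min_cases (β u) (β x + c + d u) with ⟨h3, _⟩ | ⟨h3, h4⟩
        · rw [h2, h3]; linarith
        · rw [h2, h3]; linarith
      · have : β' u = β u := by simp only [hβ'def, if_neg hpu]
        rw [this]; linarith
end

section
/- In the classical STRIPS relaxation of an ICE action a with n time-points, any plan for the relaxation that achieves q^a_0 after having achieved q^a_1 must execute the gadget actions of a in exactly the cyclic order 0, 1, ..., n-1, i.e., the number of executions of the i-th gadget action equals the number of executions of the 0-th gadget action for all i. -/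
/-- A STRIPS action: precondition, add effects, delete effects. -/
structure StripsAction (P : Type) where
  pre : Set P
  add : Set P
  del : Set P

/-- Execution of a sequence of (named) actions, each applicable in turn. -/
inductive StripsExec {P A : Type} (sem : A → StripsAction P) :
    Set P → List A → Set P → Prop
  | nil (s : Set P) : StripsExec sem s [] s
  | cons {s s' : Set P} {a : A} {l : List A} :
      (sem a).pre ⊆ s →
      StripsExec sem ((s \ (sem a).del) ∪ (sem a).add) l s' →
      StripsExec sem s (a :: l) s'

/-!
Token conservation. Exactly one counter `q c` holds at any time, and the gadget
actions move it from `c` to `c + 1`. Counting how often the token enters and leaves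
position `i` gives `#act i + [i = end] = #act (i - 1) + [i = start]`; when the plan
starts and ends at `0` this says `#act i = #act (i - 1)` for every `i`, so all counts
agree around the cycle.
-/

section Gadget

variable {P O : Type} {n : ℕ} (q : Fin n → P)

def CounterAt (s : Set P) (c : Fin n) : Prop := ∀ i, q i ∈ s ↔ i = c

variable {q} {sem : Fin n ⊕ O → StripsAction P}

lemma CounterAt.step_inl [NeZero n] (hq : Function.Injective q)
    (hgadget : ∀ i : Fin n, (sem (Sum.inl i)).pre = {q i} ∧
      (sem (Sum.inl i)).del = {q i} ∧ (sem (Sum.inl i)).add = {q (i + 1)})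
    {s : Set P} {c j : Fin n} (hs : CounterAt q s c) (hpre : (sem (Sum.inl j)).pre ⊆ s) :
    j = c ∧ CounterAt q ((s \ (sem (Sum.inl j)).del) ∪ (sem (Sum.inl j)).add) (c + 1) := by
  obtain ⟨hpre', hdel, hadd⟩ := hgadget j
  have hjc : j = c := (hs j).mp (hpre (by simp [hpre']))
  subst hjc
  refine ⟨rfl, fun i => ?_⟩
  simp only [hdel, hadd, Set.mem_union, Set.mem_sdiff, Set.mem_singleton_iff, hq.eq_iff, hs i,
    and_not_self_iff, false_or]

lemma CounterAt.step_inr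
    (hother : ∀ o : O, ∀ i : Fin n,
      q i ∉ (sem (Sum.inr o)).add ∧ q i ∉ (sem (Sum.inr o)).del)
    {s : Set P} {c : Fin n} (hs : CounterAt q s c) (o : O) :
    CounterAt q ((s \ (sem (Sum.inr o)).del) ∪ (sem (Sum.inr o)).add) c := by
  intro i
  simp [(hother o i).1, (hother o i).2, hs i]

variable [DecidableEq O]

lemma count_inl_cons_inl (l : List (Fin n ⊕ O)) (i j : Fin n) :
    (Sum.inl j :: l).count (Sum.inl i) = l.count (Sum.inl i) + if i = j then 1 else 0 := by
  rw [List.count_cons]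
  change _ + (if decide (j = i) = true then 1 else 0) = _
  simp only [decide_eq_true_eq, eq_comm (a := j)]

lemma count_inl_cons_inr (l : List (Fin n ⊕ O)) (i : Fin n) (o : O) :
    (Sum.inr o :: l).count (Sum.inl i) = l.count (Sum.inl i) := by
  rw [List.count_cons]
  rfl

theorem StripsExec.count_balance [NeZero n] (hq : Function.Injective q)
    (hgadget : ∀ i : Fin n, (sem (Sum.inl i)).pre = {q i} ∧
      (sem (Sum.inl i)).del = {q i} ∧ (sem (Sum.inl i)).add = {q (i + 1)})
    (hother : ∀ o : O, ∀ i : Fin n,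
      q i ∉ (sem (Sum.inr o)).add ∧ q i ∉ (sem (Sum.inr o)).del)
    {s s' : Set P} {plan : List (Fin n ⊕ O)} (hexec : StripsExec sem s plan s')
    {c : Fin n} (hs : CounterAt q s c) :
    ∃ d, CounterAt q s' d ∧ ∀ i : Fin n,
      plan.count (Sum.inl i) + (if i = d then 1 else 0) =
        plan.count (Sum.inl (i - 1)) + if i = c then 1 else 0 := by
  induction hexec generalizing c with
  | nil s => exact ⟨c, hs, fun i => rfl⟩
  | @cons s s' a l hpre _ ih =>
    cases a with
    | inl j =>
      obtain ⟨rfl, hs'⟩ := hs.step_inl hq hgadget hpre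
      obtain ⟨d, hd, hbal⟩ := ih hs'
      refine ⟨d, hd, fun i => ?_⟩
      have hbal_i := hbal i
      simp only [count_inl_cons_inl, sub_eq_iff_eq_add] at hbal_i ⊢
      split_ifs at hbal_i ⊢ <;> omega
    | inr o =>
      obtain ⟨d, hd, hbal⟩ := ih (hs.step_inr hother o)
      exact ⟨d, hd, fun i => by simpa only [count_inl_cons_inr] using hbal i⟩

end Gadget

open Fin.NatCast in
lemma Fin.apply_eq_apply_zero_of_forall_apply_sub_one {α : Type*} {n : ℕ} [NeZero n]
    {f : Fin n → α} (hf : ∀ i, f i = f (i - 1)) (i : Fin n) : f i = f 0 := by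
  have hcast : ∀ k : ℕ, f k = f 0 := by
    intro k
    induction k with
    | zero => simp
    | succ k ih => rw [hf, Nat.cast_succ, add_sub_cancel_right, ih]
  simpa using hcast i

/-- In the unary-counter gadget (actions `act i` with
precondition `{q i}`, delete `{q i}`, add `{q ((i+1) mod n)}`, and no other
action touching the `q` predicates), any executable action sequence that
starts in a state with exactly `q 0` true among the counters and ends in a
state where `q 0` holds executes the gadget actions in the cyclic order
`0, 1, ..., n-1`: each gadget action `i` occurs exactly as many times as
gadget action `0`. -/
theorem gadget_cyclic_counts {P O : Type} [DecidableEq O] (n : ℕ) [NeZero n]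
    (q : Fin n → P) (hq : Function.Injective q)
    (sem : Fin n ⊕ O → StripsAction P)
    (hgadget : ∀ i : Fin n, (sem (Sum.inl i)).pre = {q i} ∧
      (sem (Sum.inl i)).del = {q i} ∧ (sem (Sum.inl i)).add = {q (i + 1)})
    (hother : ∀ o : O, ∀ i : Fin n,
      q i ∉ (sem (Sum.inr o)).add ∧ q i ∉ (sem (Sum.inr o)).del)
    (init final : Set P) (hinit : ∀ i, q i ∈ init ↔ i = 0)
    (hfinal : q 0 ∈ final)
    (plan : List (Fin n ⊕ O)) (hexec : StripsExec sem init plan final) :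
    ∀ i : Fin n, plan.count (Sum.inl i) = plan.count (Sum.inl 0) := by
  obtain ⟨d, hd, hbal⟩ := hexec.count_balance hq hgadget hother (c := 0) hinit
  obtain rfl : 0 = d := (hd 0).mp hfinal
  exact Fin.apply_eq_apply_zero_of_forall_apply_sub_one fun i => by simpa using hbal i
end
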